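/- Let l ∈ {2, 3}, k > 0, R > 0, and let (a_n^m), for n ∈ ℕ and integers m with −n ≤ m ≤ n, be complex coefficients satisfying Σ_{n=0}^∞ Σ_{m=−n}^n |a_n^m|² ≤ 1. Then there exists N₀ ∈ ℕ (depending only on k, R, l) such that for every natural number N ≥ N₀, Σ_{n=N+1}^∞ Σ_{m=−n}^n |a_n^m|² · ∫_0^R r^{l−1} j_n(kr)² dr ≤ e^{k²R²} · R^l · (e·k·R/(2(N+1)))^{2(N+1)}. -/

import Mathlib

open Real Nat

/-- The spherical Bessel function of order `n`, defined by its everywhere absolutely convergent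
power series `j_n(x) = Σ_{m=0}^∞ (−1)^m x^{2m+n} / (2^m · m! · (2n+2m+1)!!)`. -/
noncomputable def sphericalBesselJ (n : ℕ) (x : ℝ) : ℝ :=
  ∑' m : ℕ, (-1 : ℝ) ^ m * x ^ (2 * m + n) /
    (2 ^ m * (m.factorial : ℝ) * ((2 * n + 2 * m + 1)‼ : ℝ))

/-! Comparing the series of `j_n` termwise with that of `exp` gives
`|j_n(x)| ≤ e^{x²/2} |x|^n / (2n+1)‼`, and `(2n+1)‼ ≥ (2n)‼ = 2^n n! ≥ (2n/e)^n` turns this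
into `|j_n(x)| ≤ e^{x²/2} (e|x|/(2n))^n`. Bounding the integrand on `(0, R]` by a constant
then gives `|∫_0^R r^{l-1} j_n(kr)² dr| ≤ e^{k²R²} R^l (ekR/(2n))^{2n}`. Once `ekR ≤ 2(N+1)`,
the base `ekR/(2n)` is at most `1` and decreasing for `n ≥ N+1`, so every term of the tail is
bounded by the `n = N+1` value, and the weights `Σ_m |a_n^m|²` sum to at most `1`. -/

namespace Nat

theorem doubleFactorial_le_succ : ∀ n : ℕ, n‼ ≤ (n + 1)‼
  | 0 => le_rfl
  | 1 => by decide
  | n + 2 => by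
    rw [doubleFactorial_add_two, doubleFactorial_add_two (n + 1)]
    exact Nat.mul_le_mul (by omega) (doubleFactorial_le_succ n)

theorem monotone_doubleFactorial : Monotone doubleFactorial :=
  monotone_nat_of_le_succ doubleFactorial_le_succ

end Nat

theorem abs_sphericalBesselJ_le (n : ℕ) (x : ℝ) :
    |sphericalBesselJ n x| ≤ Real.exp (x ^ 2 / 2) * |x| ^ n / (2 * n + 1)‼ := by
  have hexp : HasSum (fun m : ℕ => |x| ^ n / (2 * n + 1)‼ * ((x ^ 2 / 2) ^ m / m !))
      (|x| ^ n / (2 * n + 1)‼ * Real.exp (x ^ 2 / 2)) := by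
    have h : HasSum (fun m : ℕ => (x ^ 2 / 2) ^ m / m !) (Real.exp (x ^ 2 / 2)) :=
      Real.exp_eq_exp_ℝ ▸ NormedSpace.expSeries_div_hasSum_exp _
    exact h.mul_left _
  rw [sphericalBesselJ, ← Real.norm_eq_abs]
  refine (tsum_of_norm_bounded hexp fun m => ?_).trans_eq (by ring)
  have hmono : ((2 * n + 1)‼ : ℝ) ≤ (2 * n + 2 * m + 1)‼ := by
    exact_mod_cast Nat.monotone_doubleFactorial (by omega)
  calc ‖(-1 : ℝ) ^ m * x ^ (2 * m + n) / (2 ^ m * m ! * (2 * n + 2 * m + 1)‼)‖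
      = (x ^ 2) ^ m * |x| ^ n / (2 ^ m * m ! * (2 * n + 2 * m + 1)‼) := by
        simp [pow_add, pow_mul]
    _ ≤ (x ^ 2) ^ m * |x| ^ n / (2 ^ m * m ! * (2 * n + 1)‼) := by gcongr
    _ = |x| ^ n / (2 * n + 1)‼ * ((x ^ 2 / 2) ^ m / m !) := by
        rw [div_pow]
        field_simp

theorem pow_le_exp_mul_doubleFactorial (n : ℕ) :
    (2 * n : ℝ) ^ n ≤ Real.exp 1 ^ n * (2 * n + 1)‼ := by
  have hn : (n : ℝ) ^ n ≤ Real.exp 1 ^ n * n ! := by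
    have := Real.pow_div_factorial_le_exp _ n.cast_nonneg n
    rwa [div_le_iff₀ (by positivity), ← Real.exp_one_pow] at this
  have hD : ((2 ^ n * n ! : ℕ) : ℝ) ≤ (2 * n + 1)‼ := by
    rw [← Nat.doubleFactorial_two_mul]
    exact_mod_cast Nat.doubleFactorial_le_succ _
  push_cast at hD
  calc (2 * n : ℝ) ^ n = 2 ^ n * (n : ℝ) ^ n := mul_pow _ _ _
    _ ≤ 2 ^ n * (Real.exp 1 ^ n * n !) := by gcongr
    _ = Real.exp 1 ^ n * (2 ^ n * n !) := by ring
    _ ≤ Real.exp 1 ^ n * (2 * n + 1)‼ := by gcongr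

theorem abs_sphericalBesselJ_le_exp_mul_pow (n : ℕ) (x : ℝ) :
    |sphericalBesselJ n x| ≤ Real.exp (x ^ 2 / 2) * (Real.exp 1 * |x| / (2 * n)) ^ n := by
  refine (abs_sphericalBesselJ_le n x).trans ?_
  rcases n.eq_zero_or_pos with rfl | hn
  · simp
  have hD : (0 : ℝ) < (2 * n + 1)‼ := by exact_mod_cast Nat.doubleFactorial_pos _
  rw [mul_div_assoc]
  gcongr
  rw [div_pow, mul_pow, div_le_div_iff₀ hD (by positivity)]
  calc |x| ^ n * (2 * n : ℝ) ^ n ≤ |x| ^ n * (Real.exp 1 ^ n * (2 * n + 1)‼) := by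
        gcongr
        exact pow_le_exp_mul_doubleFactorial n
    _ = Real.exp 1 ^ n * |x| ^ n * (2 * n + 1)‼ := by ring

theorem sq_sphericalBesselJ_le (n : ℕ) (x : ℝ) :
    sphericalBesselJ n x ^ 2 ≤ Real.exp (x ^ 2) * (Real.exp 1 * |x| / (2 * n)) ^ (2 * n) := by
  calc sphericalBesselJ n x ^ 2 = |sphericalBesselJ n x| ^ 2 := (sq_abs _).symm
    _ ≤ (Real.exp (x ^ 2 / 2) * (Real.exp 1 * |x| / (2 * n)) ^ n) ^ 2 := by
        gcongr
        exact abs_sphericalBesselJ_le_exp_mul_pow n x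
    _ = Real.exp (x ^ 2) * (Real.exp 1 * |x| / (2 * n)) ^ (2 * n) := by
        rw [mul_pow, ← Real.exp_nat_mul, ← pow_mul']
        congr 2
        ring

theorem norm_integral_pow_mul_sq_sphericalBesselJ_le {l : ℕ} (hl : l ≠ 0) (n : ℕ) {k R : ℝ}
    (hk : 0 ≤ k) (hR : 0 ≤ R) :
    ‖∫ r in (0 : ℝ)..R, r ^ (l - 1) * sphericalBesselJ n (k * r) ^ 2‖ ≤
      Real.exp (k ^ 2 * R ^ 2) * R ^ l * (Real.exp 1 * k * R / (2 * n)) ^ (2 * n) := by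
  have hbound : ∀ r ∈ Set.uIoc 0 R, ‖r ^ (l - 1) * sphericalBesselJ n (k * r) ^ 2‖ ≤
      R ^ (l - 1) * (Real.exp (k ^ 2 * R ^ 2) * (Real.exp 1 * k * R / (2 * n)) ^ (2 * n)) := by
    rintro r ⟨hr0, hrR⟩
    rw [min_eq_left hR] at hr0
    rw [max_eq_right hR] at hrR
    rw [norm_mul, norm_pow, Real.norm_of_nonneg hr0.le, Real.norm_of_nonneg (sq_nonneg _)]
    have hkr : |k * r| ≤ k * R := by
      rw [abs_of_nonneg (by positivity)]
      gcongr
    gcongr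
    refine (sq_sphericalBesselJ_le n (k * r)).trans ?_
    rw [mul_assoc (Real.exp 1) k R]
    gcongr
    rw [← mul_pow, ← sq_abs]
    gcongr
  refine (intervalIntegral.norm_integral_le_of_norm_le_const hbound).trans_eq ?_
  rw [sub_zero, abs_of_nonneg hR, ← pow_sub_one_mul hl R]
  ring

theorem div_two_mul_pow_two_mul_le {c : ℝ} (hc : 0 ≤ c) {m n : ℕ} (hcm : c ≤ 2 * m)
    (hmn : m ≤ n) : (c / (2 * n)) ^ (2 * n) ≤ (c / (2 * m)) ^ (2 * m) := by
  rcases m.eq_zero_or_pos with rfl | hm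
  · obtain rfl : c = 0 := by push_cast at hcm; linarith
    simpa using pow_le_one₀ le_rfl zero_le_one
  have hq : c / (2 * m) ≤ 1 := div_le_one_of_le₀ hcm (by positivity)
  calc (c / (2 * n)) ^ (2 * n) ≤ (c / (2 * m)) ^ (2 * n) := by gcongr
    _ ≤ (c / (2 * m)) ^ (2 * m) := pow_le_pow_of_le_one (by positivity) hq (by omega)

theorem tsum_ite_mul_le_of_norm_le {ι : Type*} {p : ι → Prop} [DecidablePred p] {s b : ι → ℝ}
    {C : ℝ} (hs0 : ∀ i, 0 ≤ s i) (hs : Summable s) (hs1 : ∑' i, s i ≤ 1) (hC : 0 ≤ C)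
    (hb : ∀ i, p i → ‖b i‖ ≤ C) :
    ∑' i, (if p i then s i * b i else 0) ≤ C := by
  have hbound : ∀ i, ‖if p i then s i * b i else 0‖ ≤ s i * C := by
    intro i
    split_ifs with hi
    · rw [norm_mul, Real.norm_of_nonneg (hs0 i)]
      exact mul_le_mul_of_nonneg_left (hb i hi) (hs0 i)
    · simpa using mul_nonneg (hs0 i) hC
  calc ∑' i, (if p i then s i * b i else 0)
      ≤ ∑' i, s i * C :=
        (Real.le_norm_self _).trans (tsum_of_norm_bounded (hs.mul_right C).hasSum hbound)
    _ = (∑' i, s i) * C := tsum_mul_right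
    _ ≤ C := mul_le_of_le_one_left hC hs1

/-- Let `l ∈ {2, 3}`, `k > 0`, `R > 0`, and let `(a_n^m)`, for `n ∈ ℕ` and
integers `m` with `−n ≤ m ≤ n`, be complex coefficients satisfying
`Σ_{n=0}^∞ Σ_{m=−n}^n |a_n^m|² ≤ 1`.  Then there exists `N₀ ∈ ℕ` (depending only on `k, R, l`)
such that for every natural number `N ≥ N₀`,
`Σ_{n=N+1}^∞ Σ_{m=−n}^n |a_n^m|² · ∫_0^R r^{l−1} j_n(kr)² dr
  ≤ e^{k²R²} · R^l · (e·k·R/(2(N+1)))^{2(N+1)}`. -/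
theorem tail_sum_sphericalBesselJ_bound (l : ℕ) (hl : l = 2 ∨ l = 3)
    (k R : ℝ) (hk : 0 < k) (hR : 0 < R) :
    ∃ N₀ : ℕ, ∀ a : ℕ → ℤ → ℂ,
      (Summable fun n : ℕ => ∑ m ∈ Finset.Icc (-(n : ℤ)) (n : ℤ), ‖a n m‖ ^ 2) →
      (∑' n : ℕ, ∑ m ∈ Finset.Icc (-(n : ℤ)) (n : ℤ), ‖a n m‖ ^ 2) ≤ 1 →
      ∀ N : ℕ, N₀ ≤ N →
      (∑' n : ℕ, if N + 1 ≤ n then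
          (∑ m ∈ Finset.Icc (-(n : ℤ)) (n : ℤ), ‖a n m‖ ^ 2) *
            ∫ r in (0 : ℝ)..R, r ^ (l - 1) * sphericalBesselJ n (k * r) ^ 2
        else 0) ≤
      Real.exp (k ^ 2 * R ^ 2) * R ^ l *
        (Real.exp 1 * k * R / (2 * ((N : ℝ) + 1))) ^ (2 * (N + 1)) := by
  refine ⟨⌈Real.exp 1 * k * R / 2⌉₊, fun a hsum hsum_le N hN => ?_⟩
  have hl0 : l ≠ 0 := by omega
  have hekR : Real.exp 1 * k * R ≤ 2 * ((N + 1 : ℕ) : ℝ) := by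
    have := Nat.ceil_le.mp hN
    push_cast
    linarith
  refine tsum_ite_mul_le_of_norm_le (fun n => Finset.sum_nonneg fun m _ => by positivity)
    hsum hsum_le (by positivity) fun n hn => ?_
  refine (norm_integral_pow_mul_sq_sphericalBesselJ_le hl0 n hk.le hR.le).trans ?_
  gcongr
  exact_mod_cast div_two_mul_pow_two_mul_le (by positivity) hekR hn
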